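/- Variational characterization: among even smooth probability densities p on [−1,1] with p(±1)=0, a critical point of the Fisher information I(p) = ∫_{−1}^1 p'^2/p dx under the constraint ∫_{−1}^1 p = 1 must satisfy the ODE 2(p'/p)'(x) + (p'(x)/p(x))^2 + λ^2 = 0 for some λ, whose even solution vanishing at ±1 is p(x) = cos^2(πx/2) (with λ = π); equivalently β := (ln p)' satisfies 2β' + β^2 + λ^2 = 0 with β(0)=0 and β(x) = −λ tan(λx/2). -/

import Mathlib

open Real Set Filter Topology

/-!
The Riccati equation `2β' + β² + λ² = 0` linearises under `β = λ tan θ`: the function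
`arctan (β x / λ) + λ x / 2` has derivative zero, so with `β 0 = 0` it vanishes and
`β x = -λ tan (λ x / 2)` on `(-1, 1)`. Since `arctan` takes values in `(-π/2, π/2)`, this forces
`λ ≤ π`; if `λ < π` the formula stays bounded as `x → 1⁻`, contradicting `β → -∞`, so `λ = π`.
-/

section Riccati

variable {lam : ℝ} {β : ℝ → ℝ}

theorem hasDerivAt_arctan_div_add_of_riccati (hlam : lam ≠ 0) {x : ℝ}
    (h : HasDerivAt β (-(β x ^ 2 + lam ^ 2) / 2) x) :
    HasDerivAt (fun y => arctan (β y / lam) + lam / 2 * y) 0 x := by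
  have hlin : HasDerivAt (fun y : ℝ => lam / 2 * y) (lam / 2) x := by
    simpa using (hasDerivAt_id x).const_mul (lam / 2)
  refine ((h.div_const lam).arctan.add hlin).congr_deriv ?_
  have : (0 : ℝ) < 1 + (β x / lam) ^ 2 := by positivity
  field_simp
  ring

theorem arctan_div_eq_of_riccati (hlam : lam ≠ 0) {s : Set ℝ} (hs : IsOpen s)
    (hs' : IsPreconnected s) (hODE : ∀ x ∈ s, HasDerivAt β (-(β x ^ 2 + lam ^ 2) / 2) x)
    {x₀ x : ℝ} (hx₀ : x₀ ∈ s) (hx : x ∈ s) :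
    arctan (β x / lam) = arctan (β x₀ / lam) - lam / 2 * (x - x₀) := by
  have hderiv y (hy : y ∈ s) := hasDerivAt_arctan_div_add_of_riccati hlam (hODE y hy)
  have := hs.is_const_of_deriv_eq_zero hs'
    (fun y hy => (hderiv y hy).differentiableAt.differentiableWithinAt)
    (fun y hy => (hderiv y hy).deriv) hx hx₀
  linarith

theorem eq_neg_mul_tan_of_arctan_div_eq (hlam : lam ≠ 0) {b x : ℝ}
    (h : arctan (b / lam) = -(lam / 2 * x)) : b = -lam * tan (lam * x / 2) := by
  rw [show lam / 2 * x = lam * x / 2 by ring] at h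
  have := congrArg tan h
  rw [tan_arctan, tan_neg, div_eq_iff hlam] at this
  rw [this]
  ring

end Riccati

theorem le_pi_of_arctan_eq_neg_mul {lam : ℝ} (hlam : 0 < lam) {f : ℝ → ℝ}
    (h : ∀ x ∈ Ioo (-1 : ℝ) 1, arctan (f x) = -(lam / 2 * x)) : lam ≤ π := by
  by_contra! hlt
  have hx : π / lam ∈ Ioo (-1 : ℝ) 1 :=
    ⟨by linarith [div_pos pi_pos hlam], (div_lt_one hlam).2 hlt⟩
  have := neg_pi_div_two_lt_arctan (f (π / lam))
  rw [h _ hx] at this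
  field_simp at this
  linarith

theorem not_tendsto_atBot_neg_mul_tan {lam : ℝ} (h : cos (lam / 2) ≠ 0) :
    ¬Tendsto (fun x => -lam * tan (lam * x / 2)) (𝓝[<] 1) atBot := by
  have hcont : ContinuousAt (fun x => -lam * tan (lam * x / 2)) 1 :=
    continuousAt_const.mul <|
      (continuousAt_tan.2 (by simpa using h)).comp (f := fun x : ℝ => lam * x / 2) (by fun_prop)
  exact not_tendsto_atBot_of_tendsto_nhds hcont.continuousWithinAt.tendsto

theorem cos_pi_mul_div_two_pos {x : ℝ} (hx : x ∈ Ioo (-1 : ℝ) 1) : 0 < cos (π * x / 2) := by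
  obtain ⟨h₁, h₂⟩ := hx
  exact cos_pos_of_mem_Ioo ⟨by nlinarith [pi_pos], by nlinarith [pi_pos]⟩

theorem hasDerivAt_log_cos_sq (a : ℝ) {x : ℝ} (h : cos (a * x / 2) ≠ 0) :
    HasDerivAt (fun y => log (cos (a * y / 2) ^ 2)) (-a * tan (a * x / 2)) x := by
  have hlin : HasDerivAt (fun y : ℝ => a * y / 2) (a / 2) x := by
    simpa using ((hasDerivAt_id x).const_mul a).div_const 2
  refine ((hlin.cos.pow 2).log (pow_ne_zero 2 h)).congr_deriv ?_
  rw [tan_eq_sin_div_cos, Pi.pow_apply]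
  field_simp
  ring

theorem integral_cos_pi_mul_div_two_sq : ∫ x in (-1 : ℝ)..1, cos (π * x / 2) ^ 2 = 1 := by
  simp_rw [mul_div_right_comm π _ 2]
  rw [intervalIntegral.integral_comp_mul_left (fun y => cos y ^ 2) (by positivity),
    integral_cos_sq]
  simp

theorem fisher_info_critical_point_general (lam : ℝ) (hlam : 0 < lam) (β : ℝ → ℝ)
    (hODE : ∀ x ∈ Ioo (-1:ℝ) 1, HasDerivAt β (-(β x ^ 2 + lam ^ 2) / 2) x)
    (hβ0 : β 0 = 0)
    (hblowup₁ : Tendsto β (nhdsWithin 1 (Iio 1)) atBot) :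
    lam = π ∧
    (∀ x ∈ Ioo (-1:ℝ) 1, β x = -lam * Real.tan (lam * x / 2)) ∧
    (∀ x ∈ Ioo (-1:ℝ) 1, β x = -π * Real.tan (π * x / 2)) ∧
    (∀ x ∈ Ioo (-1:ℝ) 1,
      HasDerivAt (fun y => Real.log (Real.cos (π * y / 2) ^ 2)) (β x) x) ∧
    (∫ x in (-1:ℝ)..1, Real.cos (π * x / 2) ^ 2) = 1 := by
  have harctan : ∀ x ∈ Ioo (-1 : ℝ) 1, arctan (β x / lam) = -(lam / 2 * x) := by
    intro x hx
    rw [arctan_div_eq_of_riccati hlam.ne' isOpen_Ioo isPreconnected_Ioo hODE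
      (by norm_num : (0 : ℝ) ∈ Ioo (-1 : ℝ) 1) hx, hβ0]
    simp
  have hsol x (hx : x ∈ Ioo (-1 : ℝ) 1) : β x = -lam * tan (lam * x / 2) :=
    eq_neg_mul_tan_of_arctan_div_eq hlam.ne' (harctan x hx)
  have hpi : lam = π := by
    refine (le_pi_of_arctan_eq_neg_mul hlam harctan).antisymm (not_lt.1 fun hlt => ?_)
    have hcos : 0 < cos (lam / 2) := cos_pos_of_mem_Ioo ⟨by linarith, by linarith⟩
    refine not_tendsto_atBot_neg_mul_tan hcos.ne' (hblowup₁.congr' ?_)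
    filter_upwards [Ioo_mem_nhdsLT (by norm_num : (-1 : ℝ) < 1)] with x hx using hsol x hx
  subst hpi
  refine ⟨rfl, hsol, hsol, fun x hx => ?_, integral_cos_pi_mul_div_two_sq⟩
  rw [hsol x hx]
  exact hasDerivAt_log_cos_sq _ (cos_pi_mul_div_two_pos hx).ne'

/-- variational characterization. If `β = (ln p)'` satisfies the
Euler–Lagrange equation `2β' + β² + λ² = 0` of the constrained Fisher information
minimization on `(−1,1)`, with the evenness condition `β(0) = 0` and the boundary
condition that `p` vanishes at `±1` (i.e. `β` explodes to `∓∞` at `±1`), then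
necessarily `λ = π`, `β(x) = −λ tan(λx/2) = −π tan(πx/2)`, and the corresponding
density is `p(x) = cos²(πx/2)`: it has logarithmic derivative `β` on `(−1,1)` and
total mass `1`. -/
theorem fisher_info_critical_point (lam : ℝ) (hlam : 0 < lam) (β : ℝ → ℝ)
    (hODE : ∀ x ∈ Ioo (-1:ℝ) 1, HasDerivAt β (-(β x ^ 2 + lam ^ 2) / 2) x)
    (hβ0 : β 0 = 0)
    (hblowup₁ : Tendsto β (nhdsWithin 1 (Iio 1)) atBot)
    (hblowup₂ : Tendsto β (nhdsWithin (-1) (Ioi (-1))) atTop) :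
    lam = π ∧
    (∀ x ∈ Ioo (-1:ℝ) 1, β x = -lam * Real.tan (lam * x / 2)) ∧
    (∀ x ∈ Ioo (-1:ℝ) 1, β x = -π * Real.tan (π * x / 2)) ∧
    (∀ x ∈ Ioo (-1:ℝ) 1,
      HasDerivAt (fun y => Real.log (Real.cos (π * y / 2) ^ 2)) (β x) x) ∧
    (∫ x in (-1:ℝ)..1, Real.cos (π * x / 2) ^ 2) = 1 :=
  fisher_info_critical_point_general lam hlam β hODE hβ0 hblowup₁
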